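/- Let G be a d-regular graph on n vertices with second-largest eigenvalue modulus μ. For any subset S of vertices with |S| = αn (α > 0), the neighborhood ∂S = ∪_{v∈S} N(v) satisfies |∂S| ≥ d²|S| / [α(d² − μ²) + μ²]. -/

import Mathlib

open Matrix Polynomial
open scoped Classical

lemma my_charpoly_conj {n : Type*} [Fintype n] [DecidableEq n] {R : Type*} [CommRing R]
    (P Q A : Matrix n n R) (hPQ : P * Q = 1) (hQP : Q * P = 1) :
    (P * A * Q).charpoly = A.charpoly := by
  have h1 : (P * Q).map (C : R →+* R[X]) = (1 : Matrix n n R[X]) := by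
    rw [hPQ]; exact Matrix.map_one _ (map_zero C) (map_one C)
  have h2 : (Q * P).map (C : R →+* R[X]) = (1 : Matrix n n R[X]) := by
    rw [hQP]; exact Matrix.map_one _ (map_zero C) (map_one C)
  have hch : charmatrix (P * A * Q) = P.map C * charmatrix A * Q.map C := by
    simp only [charmatrix, Matrix.mul_sub, Matrix.sub_mul]
    congr 1
    · rw [scalar_apply, ← Matrix.smul_one_eq_diagonal, Matrix.mul_smul, Matrix.smul_mul,
        Matrix.mul_one, ← Matrix.map_mul, h1, Matrix.smul_one_eq_diagonal]
    · simp only [RingHom.mapMatrix_apply, Matrix.map_mul]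
  rw [Matrix.charpoly, hch, det_mul, det_mul, mul_comm, ← mul_assoc, ← det_mul, ← Matrix.map_mul,
    h2, det_one, one_mul, Matrix.charpoly]

lemma my_charpoly_eq_prod_eigenvalues {n : ℕ} (A : Matrix (Fin n) (Fin n) ℝ)
    (hA : A.IsHermitian) :
    A.charpoly = ∏ i : Fin n, (X - C (hA.eigenvalues i)) := by
  have hU := hA.spectral_theorem
  have h1 : (hA.eigenvectorUnitary : Matrix (Fin n) (Fin n) ℝ) * star hA.eigenvectorUnitary = 1 :=
    Matrix.mem_unitaryGroup_iff.mp hA.eigenvectorUnitary.2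
  have h2 : (star hA.eigenvectorUnitary : Matrix (Fin n) (Fin n) ℝ) * hA.eigenvectorUnitary = 1 :=
    Matrix.mem_unitaryGroup_iff'.mp hA.eigenvectorUnitary.2
  calc A.charpoly
      = (diagonal (RCLike.ofReal ∘ hA.eigenvalues)).charpoly := by
        conv_lhs => rw [hU]
        exact my_charpoly_conj _ _ _ h1 h2
    _ = ∏ i : Fin n, (X - C (hA.eigenvalues i)) := by
        rw [Matrix.charpoly_of_upperTriangular _ (Matrix.blockTriangular_diagonal _)]
        simp [RCLike.ofReal]

section
variable {n d : ℕ}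

lemma my_hermitian (G : SimpleGraph (Fin n)) : (G.adjMatrix ℝ).IsHermitian := by
  have h := G.isSymm_adjMatrix (α := ℝ)
  unfold Matrix.IsHermitian
  ext i j
  rw [conjTranspose_apply]
  conv_rhs => rw [← h]
  simp

lemma my_pairing (G : SimpleGraph (Fin n)) (i : Fin n) (y : Fin n → ℝ) :
    ⇑((my_hermitian G).eigenvectorBasis i) ⬝ᵥ (G.adjMatrix ℝ *ᵥ y)
      = (my_hermitian G).eigenvalues i * (⇑((my_hermitian G).eigenvectorBasis i) ⬝ᵥ y) := by
  rw [dotProduct_mulVec, ← Matrix.mulVec_transpose,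
    show (G.adjMatrix ℝ)ᵀ = G.adjMatrix ℝ from G.isSymm_adjMatrix,
    (my_hermitian G).mulVec_eigenvectorBasis, smul_dotProduct]
  rfl

def my_toE {m : ℕ} (x : Fin m → ℝ) : EuclideanSpace ℝ (Fin m) := WithLp.toLp 2 x

lemma my_inner_eq (x y : EuclideanSpace ℝ (Fin n)) : (inner ℝ x y : ℝ) = ⇑x ⬝ᵥ ⇑y := by
  simp [PiLp.inner_apply, dotProduct, mul_comm]

end

section
variable {n d : ℕ}

lemma my_multiset_eq (f g : Fin n → ℝ)
    (h : ∏ i : Fin n, (X - C (f i)) = ∏ i : Fin n, (X - C (g i))) :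
    Multiset.map f Finset.univ.val = Multiset.map g Finset.univ.val := by
  have hf : (Multiset.map (fun a => X - C a) (Multiset.map f Finset.univ.val)).prod
      = ∏ i : Fin n, (X - C (f i)) := by rw [Multiset.map_map]; rfl
  have hg : (Multiset.map (fun a => X - C a) (Multiset.map g Finset.univ.val)).prod
      = ∏ i : Fin n, (X - C (g i)) := by rw [Multiset.map_map]; rfl
  have := congrArg Polynomial.roots (hf.trans (h.trans hg.symm))
  rwa [Polynomial.roots_multiset_prod_X_sub_C, Polynomial.roots_multiset_prod_X_sub_C] at this

-- elementary operator-norm bound for adjacency matrix of a d-regular graph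
lemma my_opnorm {n d : ℕ} (G : SimpleGraph (Fin n)) (hreg : G.IsRegularOfDegree d)
    (x : Fin n → ℝ) :
    (G.adjMatrix ℝ *ᵥ x) ⬝ᵥ (G.adjMatrix ℝ *ᵥ x) ≤ (d : ℝ)^2 * (x ⬝ᵥ x) := by
  have hrow : ∀ v, (G.adjMatrix ℝ *ᵥ x) v = ∑ u ∈ G.neighborFinset v, x u := by
    intro v; simp [Matrix.mulVec, dotProduct, SimpleGraph.adjMatrix]
    rw [Finset.sum_congr rfl (fun u _ => by
      rw [show (if G.Adj v u then x u else 0) = (if u ∈ G.neighborFinset v then x u else 0) by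
        simp [SimpleGraph.mem_neighborFinset]]), Finset.sum_ite_mem, Finset.univ_inter]
  calc (G.adjMatrix ℝ *ᵥ x) ⬝ᵥ (G.adjMatrix ℝ *ᵥ x)
      = ∑ v, ((G.adjMatrix ℝ *ᵥ x) v)^2 := by
        simp [dotProduct, sq]
    _ ≤ ∑ v, (d : ℝ) * ∑ u ∈ G.neighborFinset v, (x u)^2 := by
        apply Finset.sum_le_sum
        intro v _
        rw [hrow]
        have := sq_sum_le_card_mul_sum_sq (s := G.neighborFinset v) (f := x)
        rwa [SimpleGraph.card_neighborFinset_eq_degree, hreg v] at this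
    _ = (d : ℝ) * ∑ v, ∑ u, (if u ∈ G.neighborFinset v then (x u)^2 else 0) := by
        rw [Finset.mul_sum]
        congr 1; ext v
        rw [Finset.sum_ite_mem, Finset.univ_inter]
    _ = (d : ℝ) * ∑ u, ((G.degree u : ℝ)) * (x u)^2 := by
        congr 1
        rw [Finset.sum_comm]
        refine Finset.sum_congr rfl (fun u _ => ?_)
        have : ∀ v, (if u ∈ G.neighborFinset v then (x u)^2 else 0)
            = (if v ∈ G.neighborFinset u then (1:ℝ) else 0) * (x u)^2 := by
          intro v
          by_cases h : u ∈ G.neighborFinset v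
          · have h2 : v ∈ G.neighborFinset u := by
              rw [SimpleGraph.mem_neighborFinset] at *; exact h.symm
            simp [h, h2]
          · have h2 : v ∉ G.neighborFinset u := fun hc => h (by
              rw [SimpleGraph.mem_neighborFinset] at *; exact hc.symm)
            simp [h, h2]
        simp only [this, ← Finset.sum_mul]
        congr 1
        rw [Finset.sum_boole]
        norm_cast
        rw [Finset.filter_mem_eq_inter, Finset.univ_inter]
        rfl
    _ = (d : ℝ)^2 * (x ⬝ᵥ x) := by
        simp only [hreg _]
        rw [dotProduct, Finset.mul_sum, Finset.mul_sum]
        congr 1; ext u; ring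

lemma my_spectral_bound (hn : 2 ≤ n) (G : SimpleGraph (Fin n))
    (hreg : G.IsRegularOfDegree d)
    (hop : ∀ x : Fin n → ℝ,
      (G.adjMatrix ℝ *ᵥ x) ⬝ᵥ (G.adjMatrix ℝ *ᵥ x) ≤ (d : ℝ)^2 * (x ⬝ᵥ x))
    (lam : Fin n → ℝ) (hanti : Antitone lam)
    (hchar : (G.adjMatrix ℝ).charpoly = ∏ i : Fin n, (X - C (lam i)))
    (μ : ℝ) (hμ : μ = max (lam ⟨1, Nat.lt_of_lt_of_le Nat.one_lt_two hn⟩)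
      |lam ⟨n - 1, Nat.sub_lt (Nat.lt_of_lt_of_le Nat.zero_lt_two hn) Nat.one_pos⟩|)
    (w : Fin n → ℝ) (hw : (fun _ => (1:ℝ)) ⬝ᵥ w = 0) :
    (G.adjMatrix ℝ *ᵥ w) ⬝ᵥ (G.adjMatrix ℝ *ᵥ w) ≤ μ^2 * (w ⬝ᵥ w) := by
  set A := G.adjMatrix ℝ with hAdef
  have hμ0 : 0 ≤ μ := le_trans (abs_nonneg _) (hμ ▸ le_max_right _ _)
  rcases le_or_gt (d : ℝ) μ with hcase | hcase
  · calc (A *ᵥ w) ⬝ᵥ (A *ᵥ w) ≤ (d:ℝ)^2 * (w ⬝ᵥ w) := hop w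
      _ ≤ μ^2 * (w ⬝ᵥ w) := by
        apply mul_le_mul_of_nonneg_right (by nlinarith [Nat.cast_nonneg (α := ℝ) d])
          (Finset.sum_nonneg fun i _ => mul_self_nonneg (w i))
  -- now μ < d
  · set o : Fin n → ℝ := fun _ => (1:ℝ) with ho
    set hA := my_hermitian G with hAh
    set eig := hA.eigenvalues with heig
    set B := hA.eigenvectorBasis with hB
    -- multiset equality
    have hprod : (A.charpoly) = ∏ i : Fin n, (X - C (eig i)) :=
      my_charpoly_eq_prod_eigenvalues A hA
    have hms : Multiset.map lam Finset.univ.val = Multiset.map eig Finset.univ.val :=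
      my_multiset_eq lam eig (hchar ▸ hprod)
    -- each eig value squared ≤ d²
    have heigbd : ∀ i, (eig i)^2 ≤ (d:ℝ)^2 := by
      intro i
      have h1 := hop (⇑(B i))
      rw [hA.mulVec_eigenvectorBasis, smul_dotProduct, dotProduct_smul] at h1
      have hnorm : ⇑(B i) ⬝ᵥ ⇑(B i) = 1 := by
        rw [← my_inner_eq, real_inner_self_eq_norm_sq, B.orthonormal.1 i, one_pow]
      rw [hnorm] at h1
      simpa [smul_eq_mul, sq] using h1
    -- ones vector
    have hones : A *ᵥ o = (d : ℝ) • o := by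
      funext v
      rw [hAdef, G.adjMatrix_mulVec_apply]
      simp [ho, hreg v]
    -- coordinates of ones vanish off eigenvalue d
    have hcoord : ∀ i, eig i ≠ (d:ℝ) → ⇑(B i) ⬝ᵥ o = 0 := by
      intro i hi
      have hp := my_pairing G i o
      rw [hones, dotProduct_smul] at hp
      have h2 : (eig i - d) * (⇑(B i) ⬝ᵥ o) = 0 := by
        rw [sub_mul]; rw [smul_eq_mul] at hp; linarith [hp]
      rcases mul_eq_zero.mp h2 with h | h
      · exact absurd (by linarith [sub_eq_zero.mp h]) hi
      · exact h
    -- repr in terms of dot products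
    have hrepr : ∀ (x : Fin n → ℝ) (i : Fin n),
        B.repr (my_toE x) i = ⇑(B i) ⬝ᵥ x := by
      intro x i
      rw [B.repr_apply_apply]
      exact my_inner_eq (B i) (my_toE x)
    -- Parseval
    have hparseval : ∀ x y : Fin n → ℝ,
        x ⬝ᵥ y = ∑ i, (⇑(B i) ⬝ᵥ x) * (⇑(B i) ⬝ᵥ y) := by
      intro x y
      have h1 := B.repr.inner_map_map (my_toE x) (my_toE y)
      have h2 : (x ⬝ᵥ y : ℝ) = (inner ℝ (my_toE x) (my_toE y) : ℝ) :=
        (my_inner_eq (my_toE x) (my_toE y)).symm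
      rw [h2, ← h1, my_inner_eq, dotProduct]
      refine Finset.sum_congr rfl (fun i _ => ?_)
      show (B.repr (my_toE x)) i * (B.repr (my_toE y)) i = _
      rw [hrepr x i, hrepr y i]
    -- ones is not zero (as Euclidean vector)
    have honen0 : my_toE o ≠ 0 := by
      intro h0
      have h2 : (o ⬝ᵥ o : ℝ) = n := by simp [ho, dotProduct]
      have h3 : (o ⬝ᵥ o : ℝ) = 0 := by
        have h4 : (o ⬝ᵥ o : ℝ) = (inner ℝ (my_toE o) (my_toE o) : ℝ) :=
          (my_inner_eq (my_toE o) (my_toE o)).symm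
        rw [h4, h0, inner_zero_left]
      rw [h2] at h3
      have : n = 0 := by exact_mod_cast h3
      omega
    -- at most one index with eigenvalue d
    have hcount : ∀ (f : Fin n → ℝ),
        (Finset.univ.filter (fun a => (d:ℝ) = f a)).card
          = Multiset.count (d:ℝ) (Multiset.map f Finset.univ.val) := by
      intro f
      rw [Multiset.count_map]
      rfl
    have huniq : ∀ i j : Fin n, eig i = (d:ℝ) → eig j = (d:ℝ) → i = j := by
      intro i j hi hj
      by_contra hij
      have h2 : 1 < (Finset.univ.filter (fun a => (d:ℝ) = eig a)).card :=
        Finset.one_lt_card.mpr ⟨i, by simp [hi.symm], j, by simp [hj.symm], hij⟩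
      rw [hcount, ← hms, ← hcount] at h2
      obtain ⟨j₁, hj₁, j₂, hj₂, hj12⟩ := Finset.one_lt_card.mp h2
      simp only [Finset.mem_filter] at hj₁ hj₂
      have hk : ∃ k : Fin n, lam k = (d:ℝ) ∧ 1 ≤ (k:ℕ) := by
        by_cases h0 : (j₁ : ℕ) = 0
        · refine ⟨j₂, hj₂.2.symm, ?_⟩
          have := Fin.val_ne_of_ne hj12.symm
          omega
        · exact ⟨j₁, hj₁.2.symm, by omega⟩
      obtain ⟨k, hk1, hk2⟩ := hk
      have h1k : (⟨1, by omega⟩ : Fin n) ≤ k := by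
        rw [Fin.le_def]; exact hk2
      have hd1 : (d:ℝ) ≤ lam ⟨1, by omega⟩ := hk1 ▸ hanti h1k
      have : (d:ℝ) ≤ μ := le_trans hd1 (hμ ▸ le_max_left _ _)
      linarith
    -- existence of eigenvalue d
    have hex : ∃ i, eig i = (d:ℝ) := by
      by_contra h
      push_neg at h
      apply honen0
      have hz : B.repr (my_toE o) = (0 : EuclideanSpace ℝ (Fin n)) := by
        refine PiLp.ext (fun i => ?_)
        show B.repr (my_toE o) i = (0:ℝ)
        rw [hrepr o i]
        exact hcoord i (h i)
      exact B.repr.injective (by rw [hz, map_zero])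
    obtain ⟨i₀, hi₀⟩ := hex
    have hco : ∀ i, i ≠ i₀ → B.repr (my_toE o) i = 0 := by
      intro i hne
      rw [hrepr]
      exact hcoord i (fun hd => hne (huniq i i₀ hd hi₀))
    have hdec : B.repr (my_toE o) i₀ • B i₀
        = my_toE o := by
      conv_rhs => rw [← B.sum_repr (my_toE o)]
      symm
      apply Finset.sum_eq_single i₀
      · intro i _ hne
        rw [hco i hne, zero_smul]
      · intro hmem
        exact absurd (Finset.mem_univ i₀) hmem
    have hc0 : B.repr (my_toE o) i₀ ≠ 0 := by
      intro h0
      apply honen0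
      rw [← hdec, h0, zero_smul]
    have hri₀ : ⇑(B i₀) ⬝ᵥ w = 0 := by
      have h1 : (inner ℝ (B.repr (my_toE o) i₀ • B i₀) (my_toE w) : ℝ)
          = inner ℝ (my_toE o) (my_toE w) := by
        rw [hdec]
      rw [real_inner_smul_left] at h1
      have h2 : (inner ℝ (my_toE o) (my_toE w) : ℝ) = 0 := by
        have h4 : (inner ℝ (my_toE o) (my_toE w) : ℝ) = o ⬝ᵥ w :=
          my_inner_eq (my_toE o) (my_toE w)
        rw [h4]
        exact hw
      rw [h2] at h1
      rcases mul_eq_zero.mp h1 with h | h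
      · exact absurd h hc0
      · have h3 : ⇑(B i₀) ⬝ᵥ w
            = (inner ℝ (B i₀) (my_toE w) : ℝ) :=
          (my_inner_eq (B i₀) (my_toE w)).symm
        rw [h3]
        exact h
    -- membership transfers
    have hmemlam : ∀ x : ℝ, (∃ i, eig i = x) → ∃ j, lam j = x := by
      rintro x ⟨i, hi⟩
      have hx : x ∈ Multiset.map lam Finset.univ.val := by
        rw [hms, Multiset.mem_map]
        exact ⟨i, Finset.mem_univ_val i, hi⟩
      obtain ⟨j, _, hj⟩ := Multiset.mem_map.mp hx
      exact ⟨j, hj⟩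
    have hmemeig : ∀ x : ℝ, (∃ j, lam j = x) → ∃ i, eig i = x := by
      rintro x ⟨j, hj⟩
      have hx : x ∈ Multiset.map eig Finset.univ.val := by
        rw [← hms, Multiset.mem_map]
        exact ⟨j, Finset.mem_univ_val j, hj⟩
      obtain ⟨i, _, hi⟩ := Multiset.mem_map.mp hx
      exact ⟨i, hi⟩
    have hlam0 : lam ⟨0, by omega⟩ = (d:ℝ) := by
      obtain ⟨j₀, hj₀⟩ := hmemlam (d:ℝ) ⟨i₀, hi₀⟩
      have h1 : (d:ℝ) ≤ lam ⟨0, by omega⟩ := hj₀ ▸ hanti (Fin.mk_le_mk.mpr (Nat.zero_le _))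
      obtain ⟨i₁, hi₁⟩ := hmemeig (lam ⟨0, by omega⟩) ⟨_, rfl⟩
      have h2 := heigbd i₁
      rw [hi₁] at h2
      nlinarith [Nat.cast_nonneg (α := ℝ) d]
    have heigμ : ∀ i, i ≠ i₀ → (eig i)^2 ≤ μ^2 := by
      intro i hne
      have hnd : eig i ≠ (d:ℝ) := fun hd => hne (huniq i i₀ hd hi₀)
      obtain ⟨j, hj⟩ := hmemlam (eig i) ⟨i, rfl⟩
      have hj0 : j ≠ (⟨0, by omega⟩ : Fin n) := by
        intro h
        rw [h, hlam0] at hj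
        exact hnd hj.symm
      have h1j : (⟨1, by omega⟩ : Fin n) ≤ j := by
        rw [Fin.le_def]
        have := Fin.val_ne_of_ne hj0
        simp at this ⊢
        omega
      have hjn : j ≤ (⟨n - 1, by omega⟩ : Fin n) := by
        rw [Fin.le_def]
        simp
        omega
      have hub : eig i ≤ μ := by
        rw [← hj]
        exact le_trans (hanti h1j) (hμ ▸ le_max_left _ _)
      have hlb : -μ ≤ eig i := by
        rw [← hj]
        have h1 : lam ⟨n - 1, by omega⟩ ≤ lam j := hanti hjn
        have h2 : -|lam ⟨n - 1, by omega⟩| ≤ lam ⟨n - 1, by omega⟩ := neg_abs_le _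
        have h3 : |lam ⟨n - 1, by omega⟩| ≤ μ := hμ ▸ le_max_right _ _
        linarith
      exact sq_le_sq' hlb hub
    -- final computation
    rw [hparseval w w, hparseval (A *ᵥ w) (A *ᵥ w)]
    have hAr : ∀ i, ⇑(B i) ⬝ᵥ (A *ᵥ w) = eig i * (⇑(B i) ⬝ᵥ w) := fun i => my_pairing G i w
    calc ∑ i, (⇑(B i) ⬝ᵥ (A *ᵥ w)) * (⇑(B i) ⬝ᵥ (A *ᵥ w))
        = ∑ i, (eig i * (⇑(B i) ⬝ᵥ w)) * (eig i * (⇑(B i) ⬝ᵥ w)) :=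
          Finset.sum_congr rfl (fun i _ => by rw [hAr i])
      _ ≤ ∑ i, μ^2 * ((⇑(B i) ⬝ᵥ w) * (⇑(B i) ⬝ᵥ w)) := by
          apply Finset.sum_le_sum
          intro i _
          by_cases hcase2 : i = i₀
          · rw [hcase2, hri₀]
            simp
          · have h1 := heigμ i hcase2
            have h2 : (eig i * (⇑(B i) ⬝ᵥ w)) * (eig i * (⇑(B i) ⬝ᵥ w))
                = (eig i)^2 * ((⇑(B i) ⬝ᵥ w) * (⇑(B i) ⬝ᵥ w)) := by ring
            rw [h2]
            exact mul_le_mul_of_nonneg_right h1 (mul_self_nonneg _)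
      _ = μ^2 * ∑ i, (⇑(B i) ⬝ᵥ w) * (⇑(B i) ⬝ᵥ w) := by rw [Finset.mul_sum]

end

set_option maxHeartbeats 1000000 in
/-- Let `G` be `d`-regular on `n` vertices with eigenvalue modulus
`μ = max (lam 1) |lam (n-1)|`.  For every `S` with `|S| = α n`, `α > 0`, the
neighborhood `∂S = {v : S ∩ N(v) ≠ ∅}` satisfies
`|∂S| ≥ d² |S| / (α (d² - μ²) + μ²)`. -/
theorem neighborhood_lower_bound
    (n d : ℕ) (hn : 2 ≤ n) (G : SimpleGraph (Fin n))
    (hreg : G.IsRegularOfDegree d)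
    (lam : Fin n → ℝ) (hanti : Antitone lam)
    (hchar : (G.adjMatrix ℝ).charpoly = ∏ i : Fin n, (X - C (lam i)))
    (μ : ℝ) (hμ : μ = max (lam ⟨1, by omega⟩) |lam ⟨n - 1, by omega⟩|)
    (α : ℝ) (hα : 0 < α) (S : Finset (Fin n)) (hS : (S.card : ℝ) = α * n) :
    (((Finset.univ.filter fun v => (S ∩ G.neighborFinset v).Nonempty).card : ℝ))
      ≥ (d : ℝ) ^ 2 * S.card / (α * ((d : ℝ) ^ 2 - μ ^ 2) + μ ^ 2) := by
  set A := G.adjMatrix ℝ with hAdef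
  set T := (Finset.univ.filter fun v => (S ∩ G.neighborFinset v).Nonempty) with hT
  rcases Nat.eq_zero_or_pos d with hd0 | hdpos
  · rw [hd0]
    norm_num
  -- d ≥ 1
  set s : ℝ := (S.card : ℝ) with hs
  have hn0 : (0:ℝ) < n := by positivity
  have hspos : 0 < s := by rw [hS]; exact mul_pos hα hn0
  have hα1 : α ≤ 1 := by
    have h0 : S.card ≤ n := by simpa using Finset.card_le_univ S
    have hcard : s ≤ (n:ℝ) := by rw [hs]; exact_mod_cast h0
    rw [hS] at hcard
    nlinarith
  set o : Fin n → ℝ := fun _ => (1:ℝ) with ho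
  set f : Fin n → ℝ := fun v => if v ∈ S then (1:ℝ) else 0 with hf
  set g : Fin n → ℝ := A *ᵥ f with hg
  have hof : o ⬝ᵥ f = s := by
    simp [ho, hf, dotProduct, hs]
  have hoo : o ⬝ᵥ o = (n:ℝ) := by simp [ho, dotProduct]
  have hff : f ⬝ᵥ f = s := by
    simp [hf, dotProduct, apply_ite (fun x : ℝ => x * x), Finset.sum_ite_mem, hs]
  have hAo : A *ᵥ o = (d : ℝ) • o := by
    funext v
    rw [hAdef, G.adjMatrix_mulVec_apply]
    simp [ho, hreg v]
  have hsymm : Aᵀ = A := G.isSymm_adjMatrix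
  have hpair : ∀ x y : Fin n → ℝ, (A *ᵥ x) ⬝ᵥ y = x ⬝ᵥ (A *ᵥ y) := by
    intro x y
    rw [dotProduct_comm (A *ᵥ x) y, dotProduct_mulVec y A x, ← Matrix.mulVec_transpose, hsymm,
      dotProduct_comm (A *ᵥ y) x]
  -- value of g
  have hgval : ∀ v, g v = ((S ∩ G.neighborFinset v).card : ℝ) := by
    intro v
    rw [hg, hAdef, G.adjMatrix_mulVec_apply, hf]
    rw [Finset.sum_ite_mem]
    simp [Finset.inter_comm]
  have hgnn : ∀ v, 0 ≤ g v := fun v => by rw [hgval]; positivity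
  have hgzero : ∀ v, v ∉ T → g v = 0 := by
    intro v hv
    rw [hT, Finset.mem_filter] at hv
    push_neg at hv
    have := hv (Finset.mem_univ v)
    rw [hgval, this]
    simp
  -- total sum of g
  have htot : o ⬝ᵥ g = (d:ℝ) * s := by
    rw [hg, ← hpair o f, hAo, smul_dotProduct, hof, smul_eq_mul]
  -- Cauchy-Schwarz
  have hCS : ((d:ℝ) * s)^2 ≤ (T.card : ℝ) * (g ⬝ᵥ g) := by
    have h1 : o ⬝ᵥ g = ∑ v ∈ T, g v := by
      rw [dotProduct]
      simp only [ho, one_mul]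
      rw [← Finset.sum_subset (Finset.subset_univ T) (fun v _ hv => hgzero v hv)]
    have h2 : (∑ v ∈ T, g v)^2 ≤ (T.card : ℝ) * ∑ v ∈ T, (g v)^2 := by
      exact_mod_cast sq_sum_le_card_mul_sum_sq (s := T) (f := g)
    have h3 : ∑ v ∈ T, (g v)^2 ≤ g ⬝ᵥ g := by
      rw [dotProduct]
      have := Finset.sum_le_sum_of_subset_of_nonneg (Finset.subset_univ T)
        (f := fun v => (g v)^2) (fun v _ _ => sq_nonneg (g v))
      calc ∑ v ∈ T, (g v)^2 ≤ ∑ v, (g v)^2 := this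
        _ = ∑ v, g v * g v := by simp [sq]
    calc ((d:ℝ) * s)^2 = (∑ v ∈ T, g v)^2 := by rw [← h1, htot]
      _ ≤ (T.card : ℝ) * ∑ v ∈ T, (g v)^2 := h2
      _ ≤ (T.card : ℝ) * (g ⬝ᵥ g) := by
          apply mul_le_mul_of_nonneg_left h3 (Nat.cast_nonneg _)
  -- spectral bound on g ⬝ᵥ g
  set w : Fin n → ℝ := f - α • o with hwdef
  have hwo : o ⬝ᵥ w = 0 := by
    rw [hwdef, dotProduct_sub, dotProduct_smul, hof, hoo, smul_eq_mul, hS]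
    ring
  have hopbound := my_opnorm G hreg
  have hAw := my_spectral_bound hn G hreg (fun x => by simpa [hAdef] using hopbound x)
    lam hanti (by rw [← hAdef]; exact hchar) μ hμ w hwo
  have hfw : f = w + α • o := by rw [hwdef]; ring_nf
  have hgw : g = (A *ᵥ w) + (α * d) • o := by
    rw [hg, hfw, Matrix.mulVec_add, Matrix.mulVec_smul, hAo]
    congr 1
    rw [smul_smul]
  have hAwo : (A *ᵥ w) ⬝ᵥ o = 0 := by
    rw [hpair w o, hAo, dotProduct_smul, dotProduct_comm, hwo, smul_zero]
  have hfo : f ⬝ᵥ o = s := by rw [dotProduct_comm]; exact hof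
  have hww : w ⬝ᵥ w = s - 2*α*s + α^2*n := by
    rw [hwdef]
    simp only [dotProduct_sub, sub_dotProduct, dotProduct_smul, smul_dotProduct, smul_eq_mul,
      hff, hoo, hfo, hof]
    ring
  have hgg : g ⬝ᵥ g ≤ μ^2 * (s - 2*α*s + α^2*n) + α^2*d^2*n := by
    rw [hgw]
    simp only [dotProduct_add, add_dotProduct, dotProduct_smul, smul_dotProduct, smul_eq_mul,
      hAwo, dotProduct_comm o (A *ᵥ w), hoo, mul_zero, add_zero, zero_add]
    rw [← hww]
    nlinarith [hAw]
  -- combine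
  set D : ℝ := α * ((d : ℝ) ^ 2 - μ ^ 2) + μ ^ 2 with hD
  have hμ0 : 0 ≤ μ := le_trans (abs_nonneg _) (hμ ▸ le_max_right _ _)
  have hDpos : 0 < D := by
    rw [hD]
    have : α * ((d:ℝ)^2 - μ^2) + μ^2 = α * (d:ℝ)^2 + (1-α) * μ^2 := by ring
    rw [this]
    have h1 : 0 < α * (d:ℝ)^2 := by
      have h2 : (1:ℝ) ≤ (d:ℝ) := by exact_mod_cast hdpos
      exact mul_pos hα (by nlinarith)
    nlinarith [h1, mul_nonneg (by linarith : (0:ℝ) ≤ 1-α) (sq_nonneg μ)]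
  have hkey : (d:ℝ)^2 * s ≤ (T.card : ℝ) * D := by
    have hsub : μ^2 * (s - 2*α*s + α^2*n) + α^2*d^2*n = s * D := by
      rw [hD]
      have hαn : α * (n:ℝ) = s := hS.symm
      linear_combination (α*(μ^2+(d:ℝ)^2)) * hαn
    have h1 : ((d:ℝ) * s)^2 ≤ (T.card : ℝ) * (s * D) := by
      rw [← hsub]
      calc ((d:ℝ)*s)^2 ≤ (T.card : ℝ) * (g ⬝ᵥ g) := hCS
        _ ≤ _ := mul_le_mul_of_nonneg_left hgg (Nat.cast_nonneg _)
    nlinarith [h1, hspos]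
  rw [ge_iff_le, div_le_iff₀ hDpos]
  exact hkey
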